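/- Let Σ be a compact oriented surface with smooth area form ω and let φ ∈ Diff(Σ, ω). Let ω_φ be the closed 2-form on the mapping torus M_φ induced by ω. Then the class [ω_φ] ∈ H^2(M_φ, ∂M_φ; ℝ) is Poincaré dual to (∫_Σ ω) · C(φ); equivalently, for every smooth f: M_φ → ℝ/ℤ one has ∫_{M_φ} f^*dθ ∧ ω_φ = (∫_Σ ω) · ⟨C(φ), f⟩, where dθ is the closed 1-form on ℝ/ℤ with integral 1. -/

import Mathlib

/-!
Let `G (s, ·)` be the continuous lift of `f ∘ ψ^s − f` with `∂ₛ G = D ∘ ψ^s` and `G (0, ·) = 0`.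
The suspension flow preserves `dt ⊗ ω`, so `s ↦ ∫ G (s, ·)` has constant derivative `∫ D` and
hence equals `s ∫ D`. Since `ℝ → ℝ/ℤ` is a covering map, `G` is the only continuous lift
vanishing at `s = 0`, so the limit defining `⟨C(φ), f⟩` for the normalized measure is
`(∫_Σ ω)⁻¹ ∫ D`.
-/

open MeasureTheory Set Function Filter

noncomputable section

/-- The circle `𝕋 = ℝ/ℤ`. -/
abbrev Circ : Type := AddCircle (1 : ℝ)

/-- The mapping-torus identification on `ℝ × X`: `(t, x) ∼ (t − n, eⁿ x)` for `n : ℤ`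
(so in particular `(1, x) ∼ (0, e x)`), where `e` is the underlying bijection of the
homeomorphism. -/
def mtRel {X : Type*} (e : Equiv.Perm X) (p q : ℝ × X) : Prop :=
  ∃ n : ℤ, q.1 = p.1 - n ∧ q.2 = (e ^ n) p.2

/-- The mapping torus `M_φ`: the quotient of `ℝ × X` by `(1, x) ∼ (0, e x)`, with the
quotient topology. -/
def MappingTorus {X : Type*} [TopologicalSpace X] (e : Equiv.Perm X) : Type _ :=
  Quot (mtRel e)

instance {X : Type*} [TopologicalSpace X] (e : Equiv.Perm X) :
    TopologicalSpace (MappingTorus e) :=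
  inferInstanceAs (TopologicalSpace (Quot (mtRel e)))

instance {X : Type*} [TopologicalSpace X] (e : Equiv.Perm X) :
    MeasurableSpace (MappingTorus e) := borel _

instance {X : Type*} [TopologicalSpace X] (e : Equiv.Perm X) :
    BorelSpace (MappingTorus e) := ⟨rfl⟩

/-- The canonical projection `ℝ × X → M_φ`. -/
def mtMk {X : Type*} [TopologicalSpace X] (e : Equiv.Perm X) : ℝ × X → MappingTorus e :=
  Quot.mk (mtRel e)

/-- The suspension flow `ψ^s [(t, x)] = [(t + s, x)]` on the mapping torus. -/
def suspFlow {X : Type*} [TopologicalSpace X] (e : Equiv.Perm X) (s : ℝ) :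
    MappingTorus e → MappingTorus e :=
  Quot.map (fun p => (p.1 + s, p.2)) (by
    rintro ⟨t, x⟩ ⟨t', y⟩ ⟨n, h1, h2⟩
    exact ⟨n, by simp only at h1 h2 ⊢; rw [h1]; ring, h2⟩)

/-- The measure `dt ⊗ μ` on the mapping torus: the pushforward of the product of
Lebesgue measure on `[0,1)` with `μ` under the canonical projection. -/
def mtMeasure {X : Type*} [TopologicalSpace X] (e : Equiv.Perm X) [MeasurableSpace X]
    (μ : Measure X) : Measure (MappingTorus e) :=
  Measure.map (mtMk e) ((volume.restrict (Ico (0 : ℝ) 1)).prod μ)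

/-- `AsympPair e μ f r` says that the pairing `⟨C(φ, μ), [f]⟩` of Schwartzman's
asymptotic cycle `C(φ, μ) ∈ H₁(M_φ; ℝ) ≅ Hom([M_φ, ℝ/ℤ], ℝ)` with the class of
`f : M_φ → ℝ/ℤ` equals `r`: there is a continuous family `G (s, ·)` of real-valued
lifts of `f ∘ ψ^s − f` with `G (0, ·) = 0` such that `(∫ G (s, ·) d(dt ⊗ μ)) / s → r`
as `s → ∞` (by Kingman's subadditive ergodic theorem this limit is the integral of
`G = lim g_s / s` against `dt ⊗ μ`). -/
def AsympPair {X : Type*} [TopologicalSpace X] (e : Equiv.Perm X) [MeasurableSpace X]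
    (μ : Measure X) (f : C(MappingTorus e, Circ)) (r : ℝ) : Prop :=
  ∃ G : ℝ × MappingTorus e → ℝ, Continuous G ∧ (∀ m, G (0, m) = 0) ∧
    (∀ s m, ((G (s, m) : ℝ) : Circ) = f (suspFlow e s m) - f m) ∧
    Tendsto (fun s : ℝ => (∫ m, G (s, m) ∂(mtMeasure e μ)) / s) atTop (nhds r)

open scoped ENNReal

section MappingTorus

variable {X : Type*} [TopologicalSpace X] (e : Equiv.Perm X)

theorem continuous_mtMk : Continuous (mtMk e) := continuous_quot_mk

theorem continuous_suspFlow (s : ℝ) : Continuous (suspFlow e s) :=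
  continuous_quot_lift _ <|
    continuous_quot_mk.comp <| (continuous_fst.add continuous_const).prodMk continuous_snd

theorem suspFlow_mtMk (s t : ℝ) (x : X) : suspFlow e s (mtMk e (t, x)) = mtMk e (t + s, x) := rfl

theorem mtMk_add_one (t : ℝ) (x : X) : mtMk e (t + 1, x) = mtMk e (t, e x) :=
  Quot.sound ⟨1, by push_cast; ring, by simp⟩

theorem surjOn_mtMk_Icc : SurjOn (mtMk e) (Icc 0 1 ×ˢ univ) univ := by
  rintro ⟨t, x⟩ -
  refine ⟨(Int.fract t, (e ^ ⌊t⌋) x), ⟨⟨Int.fract_nonneg t, (Int.fract_lt_one t).le⟩, trivial⟩, ?_⟩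
  refine Quot.sound ⟨-⌊t⌋, ?_, ?_⟩
  · push_cast [Int.fract]; ring
  · simp [← Equiv.Perm.mul_apply]

instance [CompactSpace X] : CompactSpace (MappingTorus e) :=
  ⟨((isCompact_Icc.prod isCompact_univ).image (continuous_mtMk e)).of_isClosed_subset
    isClosed_univ (surjOn_mtMk_Icc e)⟩

variable [MeasurableSpace X] (μ : Measure X)

theorem mtMeasure_smul [SFinite μ] (c : ℝ≥0∞) : mtMeasure e (c • μ) = c • mtMeasure e μ := by
  rw [mtMeasure, mtMeasure, Measure.prod_smul_right, Measure.map_smul]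

instance [IsFiniteMeasure μ] : IsFiniteMeasure (mtMeasure e μ) := by
  have : IsFiniteMeasure (volume.restrict (Ico (0 : ℝ) 1)) :=
    isFiniteMeasure_restrict.2 (by simp)
  unfold mtMeasure
  infer_instance

variable [OpensMeasurableSpace X]

theorem periodic_integral_mtMk {h : MappingTorus e → ℝ} (hh : Continuous h)
    (he : MeasurePreserving e μ μ) : Periodic (fun t => ∫ x, h (mtMk e (t, x)) ∂μ) 1 := by
  intro t
  have hcont : Continuous fun x => h (mtMk e (t, x)) :=
    hh.comp ((continuous_mtMk e).comp (continuous_const.prodMk continuous_id))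
  calc ∫ x, h (mtMk e (t + 1, x)) ∂μ = ∫ x, h (mtMk e (t, x)) ∂μ.map e := by
        rw [integral_map he.measurable.aemeasurable (he.map_eq ▸ hcont.aestronglyMeasurable)]
        simp only [mtMk_add_one]
    _ = ∫ x, h (mtMk e (t, x)) ∂μ := by rw [he.map_eq]

variable [CompactSpace X] [IsFiniteMeasure μ]

theorem integral_mtMeasure {h : MappingTorus e → ℝ} (hh : Continuous h) :
    ∫ m, h m ∂mtMeasure e μ = ∫ t in (0 : ℝ)..1, ∫ x, h (mtMk e (t, x)) ∂μ := by
  obtain ⟨C, hC⟩ := hh.bounded_above_of_compact_support (.of_compactSpace h)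
  have hint : Integrable (fun p => h (mtMk e p)) ((volume.restrict (Ico (0 : ℝ) 1)).prod μ) :=
    ⟨(hh.comp (continuous_mtMk e)).aestronglyMeasurable, .of_bounded (ae_of_all _ fun p => hC _)⟩
  rw [mtMeasure, integral_map (continuous_mtMk e).aemeasurable hh.aestronglyMeasurable,
    integral_prod _ hint, intervalIntegral.integral_of_le zero_le_one,
    integral_Ioc_eq_integral_Ioo, integral_Ico_eq_integral_Ioo]

theorem integral_comp_suspFlow {h : MappingTorus e → ℝ} (hh : Continuous h)
    (he : MeasurePreserving e μ μ) (u : ℝ) :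
    ∫ m, h (suspFlow e u m) ∂mtMeasure e μ = ∫ m, h m ∂mtMeasure e μ := by
  have hshift := integral_mtMeasure e μ (hh.comp (continuous_suspFlow e u))
  simp only [comp_apply, suspFlow_mtMk] at hshift
  rw [hshift, integral_mtMeasure e μ hh]
  rw [intervalIntegral.integral_comp_add_right (fun t => ∫ x, h (mtMk e (t, x)) ∂μ), zero_add,
    add_comm, (periodic_integral_mtMk e μ hh he).intervalIntegral_add_eq u 0, zero_add]

end MappingTorus

theorem integral_eq_mul_of_hasDerivAt {Y : Type*} [MeasurableSpace Y] {ν : Measure Y}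
    [IsFiniteMeasure ν] {G D : ℝ → Y → ℝ} {C I : ℝ} (hG : ∀ s, Integrable (G s) ν)
    (hG0 : ∀ y, G 0 y = 0) (hD : ∀ s, AEStronglyMeasurable (D s) ν) (hDC : ∀ s y, ‖D s y‖ ≤ C)
    (hderiv : ∀ y s, HasDerivAt (fun u => G u y) (D s y) s) (hDI : ∀ s, ∫ y, D s y ∂ν = I)
    (s : ℝ) : ∫ y, G s y ∂ν = s * I := by
  have hH : ∀ s₀, HasDerivAt (fun s => ∫ y, G s y ∂ν) I s₀ := fun s₀ => by
    simpa only [hDI] using (hasDerivAt_integral_of_dominated_loc_of_deriv_le (x₀ := s₀)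
      (bound := fun _ => C) univ_mem (.of_forall fun s => (hG s).1) (hG s₀) (hD s₀)
      (ae_of_all _ fun y s _ => hDC s y) (integrable_const C)
      (ae_of_all _ fun y s _ => hderiv y s)).2
  have hFTC := intervalIntegral.integral_eq_sub_of_hasDerivAt (a := 0) (b := s)
    (fun t _ => hH t) intervalIntegrable_const
  simpa only [hG0, integral_zero, sub_zero, intervalIntegral.integral_const, smul_eq_mul,
    mul_comm] using hFTC.symm

theorem AsympPair.eq_integral {X : Type*} [TopologicalSpace X] [CompactSpace X]
    [MeasurableSpace X] [OpensMeasurableSpace X] {e : Equiv.Perm X} {μ : Measure X}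
    [IsFiniteMeasure μ] (he : MeasurePreserving e μ μ) {f : C(MappingTorus e, Circ)}
    {D : MappingTorus e → ℝ} (hD : Continuous D) {G : ℝ × MappingTorus e → ℝ}
    (hGc : Continuous G) (hG0 : ∀ m, G (0, m) = 0)
    (hGlift : ∀ s m, ((G (s, m) : ℝ) : Circ) = f (suspFlow e s m) - f m)
    (hGderiv : ∀ m s, HasDerivAt (fun u => G (u, m)) (D (suspFlow e s m)) s) {r : ℝ}
    (hr : AsympPair e μ f r) : r = ∫ m, D m ∂mtMeasure e μ := by
  obtain ⟨G', hG'c, hG'0, hG'lift, hG'lim⟩ := hr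
  have hG'G : ∀ s m, G' (s, m) = G (s, m) := fun s m =>
    congrFun ((AddCircle.isCoveringMap_coe (1 : ℝ)).eq_of_comp_eq
      (hG'c.comp (continuous_id.prodMk continuous_const))
      (hGc.comp (continuous_id.prodMk continuous_const))
      (funext fun u => (hG'lift u m).trans (hGlift u m).symm) 0 ((hG'0 m).trans (hG0 m).symm)) s
  obtain ⟨C, hC⟩ := hD.bounded_above_of_compact_support (.of_compactSpace D)
  have hgrowth : ∀ s, ∫ m, G (s, m) ∂mtMeasure e μ = s * ∫ m, D m ∂mtMeasure e μ :=
    integral_eq_mul_of_hasDerivAt (G := fun s m => G (s, m)) (C := C)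
      (fun s => (hGc.comp (continuous_const.prodMk continuous_id)).integrable_of_hasCompactSupport
        (HasCompactSupport.of_compactSpace _))
      hG0 (fun s => (hD.comp (continuous_suspFlow e s)).aestronglyMeasurable) (fun s m => hC _)
      hGderiv (fun s => integral_comp_suspFlow e μ hD he s)
  refine tendsto_nhds_unique hG'lim (tendsto_const_nhds.congr' ?_)
  filter_upwards [eventually_ne_atTop 0] with s hs
  simp only [hG'G, hgrowth, mul_div_cancel_left₀ _ hs]

theorem area_form_poincare_dual_to_asymptotic_cycle_general
    (S : Type*) [TopologicalSpace S] [CompactSpace S]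
    [MeasurableSpace S] [BorelSpace S]
    -- the (unnormalized) measure induced by the smooth area form `ω` :
    (μ : Measure S) [IsFiniteMeasure μ]
    -- `φ ∈ Diff(S, ω)` :
    (φ : S ≃ₜ S)
    (hφ : MeasurePreserving ⇑φ μ μ)
    (f : C(MappingTorus φ.toEquiv, Circ))
    -- `D = (f^* dθ)(R)` is the derivative of `f` along the suspension flow :
    (D : MappingTorus φ.toEquiv → ℝ) (hD : Continuous D)
    (hderiv : ∃ G : ℝ × MappingTorus φ.toEquiv → ℝ, Continuous G ∧
      (∀ m, G (0, m) = 0) ∧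
      (∀ s m, ((G (s, m) : ℝ) : Circ) = f (suspFlow φ.toEquiv s m) - f m) ∧
      (∀ m s, HasDerivAt (fun u => G (u, m)) (D (suspFlow φ.toEquiv s m)) s))
    -- `r = ⟨C(φ), f⟩`, the asymptotic cycle of the normalized area measure :
    (r : ℝ) (hr : AsympPair φ.toEquiv ((μ Set.univ)⁻¹ • μ) f r) :
    ∫ m, D m ∂(mtMeasure φ.toEquiv μ) = (μ Set.univ).toReal * r := by
  obtain ⟨G, hGc, hG0, hGlift, hGderiv⟩ := hderiv
  rcases eq_or_ne (μ univ) 0 with hμ0 | hμ0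
  · simp [Measure.measure_univ_eq_zero.mp hμ0, mtMeasure]
  have : IsFiniteMeasure ((μ univ)⁻¹ • μ) := μ.smul_finite (ENNReal.inv_ne_top.2 hμ0)
  rw [hr.eq_integral (hφ.smul_measure _) hD hGc hG0 hGlift hGderiv, mtMeasure_smul,
    integral_smul_measure, ENNReal.toReal_inv, smul_eq_mul, ← mul_assoc,
    mul_inv_cancel₀ (ENNReal.toReal_ne_zero.2 ⟨hμ0, measure_ne_top μ univ⟩), one_mul]

/-- **Lemma (Poincaré duality for the asymptotic cycle).**  Let `S` be a compact
oriented surface with smooth area form `ω` (inducing the measure `μ`, of total mass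
`A = ∫_S ω`) and let `φ ∈ Diff(S, ω)`.  Then the class
`[ω_φ] ∈ H²(M_φ, ∂M_φ; ℝ)` of the induced closed `2`-form on the mapping torus is
Poincaré dual to `(∫_S ω) · C(φ)`; equivalently, for every smooth `f : M_φ → ℝ/ℤ`,
`∫_{M_φ} f^* dθ ∧ ω_φ = (∫_S ω) · ⟨C(φ), f⟩`.

Here the left-hand side is rendered as `∫_{M_φ} (f^* dθ)(R) d(dt ⊗ ω)`, where the
function `D = (f^* dθ)(R)` is the derivative of `f` along the suspension flow, i.e.
the `s`-derivative of the continuous family `G` of real lifts of `f ∘ ψ^s − f`. -/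
theorem area_form_poincare_dual_to_asymptotic_cycle
    (S : Type*) [TopologicalSpace S] [CompactSpace S] [ConnectedSpace S] [T2Space S]
    [ChartedSpace (EuclideanHalfSpace 2) S]
    [IsManifold (modelWithCornersEuclideanHalfSpace 2) (⊤ : ℕ∞) S]
    [MeasurableSpace S] [BorelSpace S]
    -- the (unnormalized) measure induced by the smooth area form `ω` :
    (μ : Measure S) [IsFiniteMeasure μ] [NullSingletonClass μ]
    (hμpos : ∀ U : Set S, IsOpen U → U.Nonempty → 0 < μ U)
    -- `φ ∈ Diff(S, ω)` :
    (φ : S ≃ₜ S)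
    (hsm : ContMDiff (modelWithCornersEuclideanHalfSpace 2)
      (modelWithCornersEuclideanHalfSpace 2) (⊤ : ℕ∞) ⇑φ)
    (hsm' : ContMDiff (modelWithCornersEuclideanHalfSpace 2)
      (modelWithCornersEuclideanHalfSpace 2) (⊤ : ℕ∞) ⇑φ.symm)
    (hφ : MeasurePreserving ⇑φ μ μ)
    (f : C(MappingTorus φ.toEquiv, Circ))
    -- `D = (f^* dθ)(R)` is the derivative of `f` along the suspension flow :
    (D : MappingTorus φ.toEquiv → ℝ) (hD : Continuous D)
    (hderiv : ∃ G : ℝ × MappingTorus φ.toEquiv → ℝ, Continuous G ∧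
      (∀ m, G (0, m) = 0) ∧
      (∀ s m, ((G (s, m) : ℝ) : Circ) = f (suspFlow φ.toEquiv s m) - f m) ∧
      (∀ m s, HasDerivAt (fun u => G (u, m)) (D (suspFlow φ.toEquiv s m)) s))
    -- `r = ⟨C(φ), f⟩`, the asymptotic cycle of the normalized area measure :
    (r : ℝ) (hr : AsympPair φ.toEquiv ((μ Set.univ)⁻¹ • μ) f r) :
    ∫ m, D m ∂(mtMeasure φ.toEquiv μ) = (μ Set.univ).toReal * r :=
  area_form_poincare_dual_to_asymptotic_cycle_general S μ φ hφ f D hD hderiv r hr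

end
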